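/- Let (S_n) be a centered random walk with finite positive variance. There is a constant c > 0 such that sup_{x∈ℝ} sup_{a∈ℝ} Σ_{k≥0} P(min_{0≤j≤k-1} S_j > S_k, S_k + a ∈ [-x-1,-x)) < ∞; more precisely this supremum is bounded by sup_{y} (R^-(1+y) - R^-(y)), which is finite by the renewal theorem. -/

import Mathlib

/-!
Pick `δ > 0` with `p = P(X₀ < -δ) > 0` and `n` with `n δ ≥ 1`. If `k` is a strict prefix minimum
with `S_k ∈ [c, c + 1)` and the `n` increments after `k` are all `< -δ` (an event independent of
`S_0, …, S_k`, of probability `pⁿ`), the walk is below `c` at time `k + n`, so every later strict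
minimum in `[c, c + 1)` occurs before `k + n`. Hence such `k` lie in a window of length `n` on
every path, and the expected number of strict minima in `[c, c + 1)` is at most `n / pⁿ`.
An increment `R⁻(1 + y) - R⁻(y)` is the expected number of descending ladder heights in
`[-1 - y, -y)`, and distinct ladder epochs are distinct strict minima as long as the ladder does
not stop.
-/

open MeasureTheory ProbabilityTheory Filter Set
open scoped ENNReal

noncomputable section

variable {Ω : Type*}

/-- Partial sums of the increments: `Srw X n = X 0 + ⋯ + X (n-1)`. -/
def Srw (X : ℕ → Ω → ℝ) (n : ℕ) (ω : Ω) : ℝ := ∑ i ∈ Finset.range n, X i ω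

/-- Strict descending ladder epochs of the random walk. -/
def Tdesc (X : ℕ → Ω → ℝ) (ω : Ω) : ℕ → ℕ
  | 0 => 0
  | i + 1 => sInf {j | Tdesc X ω i < j ∧ Srw X j ω < Srw X (Tdesc X ω i) ω}

/-- Strict descending ladder heights. -/
def Hdesc (X : ℕ → Ω → ℝ) (i : ℕ) (ω : Ω) : ℝ := Srw X (Tdesc X ω i) ω

/-- Strict ascending ladder epochs of the random walk. -/
def Tasc (X : ℕ → Ω → ℝ) (ω : Ω) : ℕ → ℕ
  | 0 => 0
  | i + 1 => sInf {j | Tasc X ω i < j ∧ Srw X (Tasc X ω i) ω < Srw X j ω}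

/-- Strict ascending ladder heights. -/
def Hasc (X : ℕ → Ω → ℝ) (i : ℕ) (ω : Ω) : ℝ := Srw X (Tasc X ω i) ω

/-- Renewal function of the strict descending ladder heights:
`R⁻(u) = ∑_{j≥0} P(H_j⁻ ≥ -u)`. -/
def Rminus [MeasurableSpace Ω] (X : ℕ → Ω → ℝ) (μ : Measure Ω) (u : ℝ) : ℝ :=
  ∑' j : ℕ, (μ {ω | -u ≤ Hdesc X j ω}).toReal

/-- Renewal function of the strict ascending ladder heights:
`R⁺(u) = ∑_{j≥0} P(H_j⁺ ≤ u)`. -/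
def Rplus [MeasurableSpace Ω] (X : ℕ → Ω → ℝ) (μ : Measure Ω) (u : ℝ) : ℝ :=
  ∑' j : ℕ, (μ {ω | Hasc X j ω ≤ u}).toReal

lemma measurable_sInf_setOf {α : Type*} [MeasurableSpace α] {p : ℕ → α → Prop}
    (hp : ∀ j, Measurable (p j)) : Measurable fun x => sInf {j | p j x} := by
  classical
  -- `sInf ∅ = 0` in `ℕ`; allowing "no `j` works" makes `Nat.find` return `0` in that case too.
  have hq : ∀ x, ∃ n, p n x ∨ ∀ j, ¬ p j x := fun x => by
    by_cases h : ∃ j, p j x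
    · exact h.imp fun _ => Or.inl
    · exact ⟨0, Or.inr (not_exists.1 h)⟩
  have hfind : (fun x => sInf {j | p j x}) = fun x => Nat.find (hq x) := by
    funext x
    by_cases h : ∃ j, p j x
    · refine ((Nat.find_eq_iff _).2 ⟨Or.inl (Nat.sInf_mem h), fun n hn => ?_⟩).symm
      exact not_or.2 ⟨Nat.notMem_of_lt_sInf hn, fun hall => hall _ h.choose_spec⟩
    · have hempty : {j | p j x} = (∅ : Set ℕ) :=
        Set.eq_empty_of_forall_notMem (not_exists.1 h)
      rw [hempty, Nat.sInf_empty, eq_comm, Nat.find_eq_zero]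
      exact Or.inr (not_exists.1 h)
  rw [hfind]
  exact measurable_find hq fun n => ((hp n).or (Measurable.forall fun j => (hp j).not)).setOf

lemma Measurable.apply_index {α β ι : Type*} [MeasurableSpace α] [MeasurableSpace β]
    [MeasurableSpace ι] [Countable ι] [MeasurableSingletonClass ι] {f : α → ι} {F : ι → α → β}
    (hf : Measurable f) (hF : ∀ i, Measurable (F i)) : Measurable fun x => F (f x) x :=
  (measurable_from_prod_countable_left (f := fun q : α × ι => F q.2 q.1) hF).comp
    (measurable_id.prodMk hf)

lemma measurable_const_imp {α : Type*} [MeasurableSpace α] {p : Prop} {q : α → Prop}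
    (hq : p → Measurable q) : Measurable fun a => p → q a := by
  by_cases hp : p
  · simpa only [hp, true_imp_iff] using hq hp
  · simpa only [hp, false_imp_iff] using measurable_const

section MeasureLemmas

variable {α : Type*} [MeasurableSpace α] {μ : Measure α}

lemma tsum_measure_eq_lintegral_tsum_indicator {ι : Type*} [Countable ι] {s : ι → Set α}
    (hs : ∀ i, MeasurableSet (s i)) :
    ∑' i, μ (s i) = ∫⁻ x, ∑' i, (s i).indicator 1 x ∂μ := by
  rw [lintegral_tsum fun i => (measurable_one.indicator (hs i)).aemeasurable]
  exact tsum_congr fun i => (lintegral_indicator_one (hs i)).symm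

lemma tsum_measure_le_tsum_of_ae_injective {ι κ : Type*} [Countable ι] [Countable κ]
    {s : ι → Set α} {t : κ → Set α} (hs : ∀ i, MeasurableSet (s i))
    (ht : ∀ k, MeasurableSet (t k)) {f : α → ι → κ}
    (hf : ∀ᵐ x ∂μ, Function.Injective (f x) ∧ ∀ i, x ∈ s i → x ∈ t (f x i)) :
    ∑' i, μ (s i) ≤ ∑' k, μ (t k) := by
  rw [tsum_measure_eq_lintegral_tsum_indicator hs, tsum_measure_eq_lintegral_tsum_indicator ht]
  refine lintegral_mono_ae (hf.mono fun x ⟨hinj, hst⟩ => ?_)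
  calc ∑' i, (s i).indicator 1 x ≤ ∑' i, (t (f x i)).indicator 1 x :=
        ENNReal.tsum_le_tsum fun i => Set.indicator_apply_le'
          (fun hi => (Set.indicator_of_mem (hst i hi) _).ge) fun _ => zero_le
    _ ≤ ∑' k, (t k).indicator 1 x := ENNReal.tsum_comp_le_tsum_of_injective hinj _

lemma tsum_measure_le_of_forall_lt_add {s : ℕ → Set α} (hs : ∀ k, MeasurableSet (s k)) {n : ℕ}
    (hclose : ∀ x k k', k ≤ k' → x ∈ s k → x ∈ s k' → k' < k + n) :
    ∑' k, μ (s k) ≤ n * μ univ := by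
  classical
  rw [tsum_measure_eq_lintegral_tsum_indicator hs, ← lintegral_const]
  refine lintegral_mono fun x => ?_
  by_cases h : ∃ k, x ∈ s k
  · have hsupp : ∀ k ∉ Finset.Ico (Nat.find h) (Nat.find h + n),
      (s k).indicator (1 : α → ℝ≥0∞) x = 0 :=
      fun k hk => Set.indicator_of_notMem (fun hx => hk (Finset.mem_Ico.2
        ⟨Nat.find_min' h hx, hclose x _ k (Nat.find_min' h hx) (Nat.find_spec h) hx⟩)) _
    calc ∑' k, (s k).indicator (1 : α → ℝ≥0∞) x
        = ∑ k ∈ Finset.Ico (Nat.find h) (Nat.find h + n), (s k).indicator 1 x :=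
          tsum_eq_sum hsupp
      _ ≤ ∑ _k ∈ Finset.Ico (Nat.find h) (Nat.find h + n), 1 :=
          Finset.sum_le_sum fun k _ => Set.indicator_apply_le' (fun _ => le_rfl) fun _ => zero_le
      _ = (n : ℝ≥0∞) := by simp
  · simp only [not_exists] at h
    simp [Set.indicator_of_notMem (h _)]

lemma exists_pos_measure_lt_neg {f : α → ℝ} (hint : Integrable f μ) (hmean : ∫ x, f x ∂μ = 0)
    (hf : ¬ f =ᵐ[μ] 0) : ∃ δ : ℝ, 0 < δ ∧ 0 < μ {x | f x < -δ} := by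
  by_contra! hnull
  have hneg : μ {x | f x < 0} = 0 := by
    have hunion : {x | f x < 0} = ⋃ n : ℕ, {x | f x < -(1 / (n + 1))} := by
      ext x
      simp only [mem_ofPred_eq, mem_iUnion]
      constructor
      · intro hx
        obtain ⟨n, hn⟩ := exists_nat_one_div_lt (neg_pos.2 hx)
        exact ⟨n, by linarith⟩
      · rintro ⟨n, hn⟩
        linarith [Nat.one_div_pos_of_nat (α := ℝ) (n := n)]
    rw [hunion]
    exact measure_iUnion_null fun n => nonpos_iff_eq_zero.1 (hnull _ Nat.one_div_pos_of_nat)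
  have hnonneg : 0 ≤ᵐ[μ] f := by
    rw [EventuallyLE, ae_iff]
    simpa only [Pi.zero_apply, not_le] using hneg
  exact hf ((integral_eq_zero_iff_of_nonneg_ae hnonneg hint).1 hmean)

end MeasureLemmas

section RandomWalk

variable {X : ℕ → Ω → ℝ}

lemma Srw_zero (X : ℕ → Ω → ℝ) (ω : Ω) : Srw X 0 ω = 0 := Finset.sum_range_zero _

lemma measurable_Srw [MeasurableSpace Ω] (hX : ∀ i, Measurable (X i)) (n : ℕ) :
    Measurable (Srw X n) :=
  Finset.measurable_sum _ fun i _ => hX i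

def strictDescentsAfter (X : ℕ → Ω → ℝ) (ω : Ω) (t : ℕ) : Set ℕ :=
  {j | t < j ∧ Srw X j ω < Srw X t ω}

lemma Tdesc_succ (X : ℕ → Ω → ℝ) (ω : Ω) (i : ℕ) :
    Tdesc X ω (i + 1) = sInf (strictDescentsAfter X ω (Tdesc X ω i)) := rfl

lemma measurable_Tdesc [MeasurableSpace Ω] (hX : ∀ i, Measurable (X i)) (i : ℕ) :
    Measurable fun ω => Tdesc X ω i := by
  induction i with
  | zero => exact measurable_const
  | succ i ih =>
    refine ih.apply_index (F := fun t ω => sInf (strictDescentsAfter X ω t)) fun t => ?_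
    exact measurable_sInf_setOf fun j =>
      measurable_const.and ((measurable_Srw hX j).lt (measurable_Srw hX t))

lemma measurable_Hdesc [MeasurableSpace Ω] (hX : ∀ i, Measurable (X i)) (i : ℕ) :
    Measurable (Hdesc X i) :=
  (measurable_Tdesc hX i).apply_index (measurable_Srw hX)

lemma Tdesc_succ_mem {ω : Ω} {i : ℕ} (h : (strictDescentsAfter X ω (Tdesc X ω i)).Nonempty) :
    Tdesc X ω (i + 1) ∈ strictDescentsAfter X ω (Tdesc X ω i) :=
  Nat.sInf_mem h

lemma Hdesc_nonpos (X : ℕ → Ω → ℝ) (ω : Ω) : ∀ i, Hdesc X i ω ≤ 0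
  | 0 => (Srw_zero X ω).le
  | i + 1 => by
    by_cases h : (strictDescentsAfter X ω (Tdesc X ω i)).Nonempty
    · exact (Tdesc_succ_mem h).2.le.trans (Hdesc_nonpos X ω i)
    · rw [Set.not_nonempty_iff_eq_empty] at h
      simp only [Hdesc, Tdesc_succ, h, Nat.sInf_empty, Srw_zero, le_refl]

lemma Tdesc_periodic {ω : Ω} {i : ℕ} (h : strictDescentsAfter X ω (Tdesc X ω i) = ∅) :
    Function.Periodic (Tdesc X ω) (i + 1) := by
  intro s
  induction s with
  | zero => rw [zero_add, Tdesc_succ, h, Nat.sInf_empty]; rfl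
  | succ s ih => rw [add_right_comm, Tdesc_succ, ih, Tdesc_succ]

section Alive

variable {ω : Ω} (halive : ∀ i, (strictDescentsAfter X ω (Tdesc X ω i)).Nonempty)
include halive

lemma Tdesc_strictMono : StrictMono (Tdesc X ω) :=
  strictMono_nat_of_lt_succ fun i => (Tdesc_succ_mem (halive i)).1

lemma Srw_Tdesc_lt_of_lt (i : ℕ) : ∀ l < Tdesc X ω i, Srw X (Tdesc X ω i) ω < Srw X l ω := by
  induction i with
  | zero => intro l hl; exact absurd hl (Nat.not_lt_zero l)
  | succ i ih =>
    intro l hl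
    have hsucc := Tdesc_succ_mem (halive i)
    rcases lt_trichotomy l (Tdesc X ω i) with h | rfl | h
    · exact hsucc.2.trans (ih l h)
    · exact hsucc.2
    · have hnot : l ∉ strictDescentsAfter X ω (Tdesc X ω i) := Nat.notMem_of_lt_sInf hl
      exact hsucc.2.trans_le (not_lt.1 fun hlt => hnot ⟨h, hlt⟩)

end Alive

def strictMinIn (X : ℕ → Ω → ℝ) (I : Set ℝ) (k : ℕ) : Set Ω :=
  {ω | (∀ j < k, Srw X k ω < Srw X j ω) ∧ Srw X k ω ∈ I}

def descentRun (X : ℕ → Ω → ℝ) (δ : ℝ) (n k : ℕ) : Set Ω :=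
  {ω | ∀ i ∈ Finset.Ico k (k + n), X i ω < -δ}

lemma measurableSet_strictMinIn {m : MeasurableSpace Ω} {I : Set ℝ} {k : ℕ}
    (hS : ∀ j ≤ k, Measurable (Srw X j)) (hI : MeasurableSet I) :
    MeasurableSet (strictMinIn X I k) :=
  ((Measurable.forall fun j => measurable_const_imp fun hj =>
    (hS k le_rfl).lt (hS j hj.le)).and (hS k le_rfl hI).mem).setOf

lemma measurableSet_descentRun {m : MeasurableSpace Ω} {δ : ℝ} {n k : ℕ}
    (hX : ∀ i ∈ Finset.Ico k (k + n), Measurable (X i)) :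
    MeasurableSet (descentRun X δ n k) :=
  (Measurable.forall fun i => measurable_const_imp fun hi =>
    (hX i hi).lt measurable_const).setOf

lemma measure_strictMinIn_inter_descentRun [MeasurableSpace Ω] {μ : Measure Ω}
    (hX : ∀ i, Measurable (X i)) (hindep : iIndepFun X μ) {I : Set ℝ}
    (hI : MeasurableSet I) (δ : ℝ) (n k : ℕ) :
    μ (strictMinIn X I k ∩ descentRun X δ n k)
      = μ (strictMinIn X I k) * μ (descentRun X δ n k) := by
  let σ : ℕ → MeasurableSpace Ω := fun i => MeasurableSpace.comap (X i) inferInstance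
  have hpast : ∀ i < k, Measurable[⨆ i ∈ Iio k, σ i] (X i) := fun i hi =>
    (comap_measurable (X i)).mono (le_iSup₂ (f := fun i (_ : i ∈ Iio k) => σ i) i hi) le_rfl
  have hfuture : ∀ i ≥ k, Measurable[⨆ i ∈ Ici k, σ i] (X i) := fun i hi =>
    (comap_measurable (X i)).mono (le_iSup₂ (f := fun i (_ : i ∈ Ici k) => σ i) i hi) le_rfl
  have hind := indep_iSup_of_disjoint (fun i => (hX i).comap_le)
    ((iIndepFun_iff_iIndep _ _ _).1 hindep) (Set.disjoint_left.2 fun i (hi : i < k) hi' =>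
      (Nat.not_le.2 hi) (Set.mem_Ici.1 hi'))
  refine (Indep_iff _ _ μ).1 hind _ _ (measurableSet_strictMinIn (fun j hj => ?_) hI)
    (measurableSet_descentRun fun i hi => hfuture i (Finset.mem_Ico.1 hi).1)
  exact Finset.measurable_sum _ fun i hi => hpast i ((Finset.mem_range.1 hi).trans_le hj)

lemma measure_descentRun [MeasurableSpace Ω] {μ : Measure Ω} (hindep : iIndepFun X μ)
    (hident : ∀ i, IdentDistrib (X i) (X 0) μ μ) (δ : ℝ) (n k : ℕ) :
    μ (descentRun X δ n k) = μ {ω | X 0 ω < -δ} ^ n := by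
  have hrun : descentRun X δ n k = ⋂ i ∈ Finset.Ico k (k + n), X i ⁻¹' Iio (-δ) := by
    ext ω
    simp [descentRun]
  rw [hrun, hindep.measure_inter_preimage_eq_mul _ fun _ _ => measurableSet_Iio,
    Finset.prod_congr rfl fun i _ => (hident i).measure_mem_eq measurableSet_Iio,
    Finset.prod_const, Nat.card_Ico, Nat.add_sub_cancel_left]
  rfl

lemma lt_add_of_mem_strictMinIn_of_mem_descentRun {δ c : ℝ} {n k k' : ℕ} {ω : Ω}
    (hn : 1 ≤ n * δ) (hk : ω ∈ strictMinIn X (Ico c (c + 1)) k) (hrun : ω ∈ descentRun X δ n k)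
    (hk' : ω ∈ strictMinIn X (Ico c (c + 1)) k') : k' < k + n := by
  by_contra! hfar
  have hdrop : Srw X (k + n) ω - Srw X k ω ≤ -(n * δ) := by
    rw [Srw, Srw, ← Finset.sum_Ico_eq_sub _ (Nat.le_add_right k n)]
    calc ∑ i ∈ Finset.Ico k (k + n), X i ω ≤ ∑ _i ∈ Finset.Ico k (k + n), -δ :=
          Finset.sum_le_sum fun i hi => (hrun i hi).le
      _ = -(n * δ) := by simp
  have hle : Srw X k' ω ≤ Srw X (k + n) ω := by
    rcases hfar.eq_or_lt with heq | hlt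
    · rw [heq]
    · exact (hk'.1 _ hlt).le
  linarith [hk.2.2, hk'.2.1]

lemma tsum_measure_strictMinIn_mul_le [MeasurableSpace Ω] {μ : Measure Ω}
    [IsProbabilityMeasure μ] (hX : ∀ i, Measurable (X i)) (hindep : iIndepFun X μ)
    (hident : ∀ i, IdentDistrib (X i) (X 0) μ μ) {δ : ℝ} {n : ℕ} (hn : 1 ≤ n * δ) (c : ℝ) :
    (∑' k, μ (strictMinIn X (Ico c (c + 1)) k)) * μ {ω | X 0 ω < -δ} ^ n ≤ n := by
  calc (∑' k, μ (strictMinIn X (Ico c (c + 1)) k)) * μ {ω | X 0 ω < -δ} ^ n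
      = ∑' k, μ (strictMinIn X (Ico c (c + 1)) k ∩ descentRun X δ n k) := by
        rw [← ENNReal.tsum_mul_right]
        refine tsum_congr fun k => ?_
        rw [measure_strictMinIn_inter_descentRun hX hindep measurableSet_Ico,
          measure_descentRun hindep hident]
    _ ≤ n * μ univ :=
        tsum_measure_le_of_forall_lt_add
          (fun k => (measurableSet_strictMinIn (fun j _ => measurable_Srw hX j)
            measurableSet_Ico).inter (measurableSet_descentRun fun i _ => hX i))
          fun _ _ _ _ hk hk' => lt_add_of_mem_strictMinIn_of_mem_descentRun hn hk.1 hk.2 hk'.1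
    _ = n := by rw [measure_univ, mul_one]

lemma exists_tsum_measure_strictMinIn_Ico_le [MeasurableSpace Ω] {μ : Measure Ω}
    [IsProbabilityMeasure μ] (hX : ∀ i, Measurable (X i)) (hindep : iIndepFun X μ)
    (hident : ∀ i, IdentDistrib (X i) (X 0) μ μ) (hint : Integrable (X 0) μ)
    (hmean : ∫ ω, X 0 ω ∂μ = 0) (hvar : 0 < ∫ ω, X 0 ω ^ 2 ∂μ) :
    ∃ C : ℝ, 0 < C ∧
      ∀ c : ℝ, ∑' k, μ (strictMinIn X (Ico c (c + 1)) k) ≤ ENNReal.ofReal C := by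
  have hnondeg : ¬ X 0 =ᵐ[μ] 0 := fun h => hvar.ne' <| by
    rw [integral_congr_ae (h.mono fun ω hω => congrArg (· ^ 2) hω)]
    simp
  obtain ⟨δ, hδ, hp⟩ := exists_pos_measure_lt_neg hint hmean hnondeg
  set n := ⌈δ⁻¹⌉₊
  have hn : 1 ≤ n * δ := calc
    (1 : ℝ) = δ⁻¹ * δ := (inv_mul_cancel₀ hδ.ne').symm
    _ ≤ n * δ := mul_le_mul_of_nonneg_right (Nat.le_ceil _) hδ.le
  have hpow : μ {ω | X 0 ω < -δ} ^ n ≠ 0 := pow_ne_zero _ hp.ne'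
  have hfin : (n : ℝ≥0∞) / μ {ω | X 0 ω < -δ} ^ n ≠ ∞ :=
    ENNReal.div_ne_top (ENNReal.natCast_ne_top n) hpow
  refine ⟨((n : ℝ≥0∞) / μ {ω | X 0 ω < -δ} ^ n).toReal,
    ENNReal.toReal_pos ?_ hfin, fun c => ?_⟩
  · exact ENNReal.div_ne_zero.2 ⟨Nat.cast_ne_zero.2 (Nat.ceil_pos.2 (inv_pos.2 hδ)).ne',
      ENNReal.pow_ne_top (measure_ne_top _ _)⟩
  rw [ENNReal.ofReal_toReal hfin, ENNReal.le_div_iff_mul_le (Or.inl hpow)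
    (Or.inl (ENNReal.pow_ne_top (measure_ne_top _ _)))]
  exact tsum_measure_strictMinIn_mul_le hX hindep hident hn c

section RenewalFunction

lemma Rminus_nonneg [MeasurableSpace Ω] (X : ℕ → Ω → ℝ) (μ : Measure Ω) (u : ℝ) :
    0 ≤ Rminus X μ u :=
  tsum_nonneg fun _ => ENNReal.toReal_nonneg

variable [MeasurableSpace Ω] {μ : Measure Ω}

lemma Rminus_of_neg {u : ℝ} (hu : u < 0) : Rminus X μ u = 0 := by
  have hempty : ∀ j, {ω | -u ≤ Hdesc X j ω} = ∅ := fun j =>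
    Set.eq_empty_of_forall_notMem fun ω (h : -u ≤ Hdesc X j ω) =>
      by linarith [Hdesc_nonpos X ω j]
  simp [Rminus, hempty]

lemma Rminus_eq_toReal_tsum [IsFiniteMeasure μ] (u : ℝ) :
    Rminus X μ u = (∑' j, μ {ω | -u ≤ Hdesc X j ω}).toReal :=
  (ENNReal.tsum_toReal_eq fun _ => measure_ne_top _ _).symm

/-- Borel–Cantelli rules out a last ladder epoch: after one, the epochs cycle back to `0`, so
`H_j⁻ = 0 ≥ -u` for infinitely many `j`. -/
lemma ae_strictDescentsAfter_nonempty {u : ℝ} (hu : 0 ≤ u)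
    (hfin : ∑' j, μ {ω | -u ≤ Hdesc X j ω} ≠ ∞) :
    ∀ᵐ ω ∂μ, ∀ i, (strictDescentsAfter X ω (Tdesc X ω i)).Nonempty := by
  filter_upwards [ae_eventually_notMem hfin] with ω hω i
  by_contra hlast
  obtain ⟨N, hN⟩ := eventually_atTop.1 hω
  have hzero := (Tdesc_periodic (Set.not_nonempty_iff_eq_empty.1 hlast)).nat_mul_eq N
  rw [Nat.cast_id] at hzero
  refine hN (N * (i + 1)) (Nat.le_mul_of_pos_right N i.succ_pos) ?_
  rw [Hdesc, hzero]
  exact (neg_nonpos.2 hu).trans_eq (Srw_zero X ω).symm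

lemma Rminus_add_one_sub_le [IsFiniteMeasure μ] (hX : ∀ i, Measurable (X i)) {C : ℝ}
    (hC : 0 ≤ C)
    (hbound : ∀ c : ℝ, ∑' k, μ (strictMinIn X (Ico c (c + 1)) k) ≤ ENNReal.ofReal C) (y : ℝ) :
    Rminus X μ (1 + y) - Rminus X μ y ≤ C := by
  rcases lt_or_ge (1 + y) 0 with hy | hy
  · rw [Rminus_of_neg hy]
    linarith [Rminus_nonneg X μ y]
  rw [Rminus_eq_toReal_tsum, Rminus_eq_toReal_tsum]
  by_cases htop : ∑' j, μ {ω | -(1 + y) ≤ Hdesc X j ω} = ∞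
  · rw [htop, ENNReal.toReal_top, zero_sub]
    linarith [ENNReal.toReal_nonneg (a := ∑' j, μ {ω | -y ≤ Hdesc X j ω})]
  have hmono : ∑' j, μ {ω | -y ≤ Hdesc X j ω} ≤ ∑' j, μ {ω | -(1 + y) ≤ Hdesc X j ω} :=
    ENNReal.tsum_le_tsum fun j => measure_mono fun ω (h : -y ≤ Hdesc X j ω) =>
      show -(1 + y) ≤ Hdesc X j ω by linarith
  have hband : ∑' j, μ {ω | -(1 + y) ≤ Hdesc X j ω} - ∑' j, μ {ω | -y ≤ Hdesc X j ω}
      ≤ ∑' j, μ {ω | Hdesc X j ω ∈ Ico (-(1 + y)) (-(1 + y) + 1)} := by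
    rw [tsub_le_iff_left, ← ENNReal.tsum_add]
    refine ENNReal.tsum_le_tsum fun j => (measure_mono fun ω (h : -(1 + y) ≤ _) => ?_).trans
      (measure_union_le _ _)
    by_cases h' : -y ≤ Hdesc X j ω
    · exact Or.inl h'
    · exact Or.inr ⟨h, by linarith⟩
  have hladder : ∑' j, μ {ω | Hdesc X j ω ∈ Ico (-(1 + y)) (-(1 + y) + 1)}
      ≤ ∑' k, μ (strictMinIn X (Ico (-(1 + y)) (-(1 + y) + 1)) k) :=
    tsum_measure_le_tsum_of_ae_injective (fun j => measurable_Hdesc hX j measurableSet_Ico)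
      (fun k => measurableSet_strictMinIn (fun j _ => measurable_Srw hX j) measurableSet_Ico)
      ((ae_strictDescentsAfter_nonempty hy htop).mono fun ω halive =>
        ⟨(Tdesc_strictMono halive).injective, fun j hj => ⟨Srw_Tdesc_lt_of_lt halive j, hj⟩⟩)
  calc _ ≤ (∑' j, μ {ω | -(1 + y) ≤ Hdesc X j ω} - ∑' j, μ {ω | -y ≤ Hdesc X j ω}).toReal :=
        ENNReal.le_toReal_sub (ne_top_of_le_ne_top htop hmono)
    _ ≤ C := ENNReal.toReal_le_of_le_ofReal hC (hband.trans (hladder.trans (hbound _)))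

end RenewalFunction

end RandomWalk

theorem uniform_strict_minima_bound_general
    [MeasurableSpace Ω] (μ : Measure Ω) [IsProbabilityMeasure μ]
    (X : ℕ → Ω → ℝ)
    (hmeas : ∀ i, Measurable (X i))
    (hindep : iIndepFun X μ)
    (hident : ∀ i, IdentDistrib (X i) (X 0) μ μ)
    (hint : Integrable (X 0) μ)
    (hmean : ∫ ω, X 0 ω ∂μ = 0)
    (hvar : 0 < ∫ ω, (X 0 ω) ^ 2 ∂μ) :
    ∃ C : ℝ, 0 < C ∧
      (∀ y : ℝ, Rminus X μ (1 + y) - Rminus X μ y ≤ C) ∧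
      ∀ x a : ℝ,
        (∑' k : ℕ,
            μ {ω | (∀ j, j < k → Srw X k ω < Srw X j ω) ∧
              Srw X k ω + a ∈ Set.Ico (-x - 1) (-x)}) ≤ ENNReal.ofReal C := by
  obtain ⟨C, hC, hbound⟩ :=
    exists_tsum_measure_strictMinIn_Ico_le hmeas hindep hident hint hmean hvar
  refine ⟨C, hC, Rminus_add_one_sub_le hmeas hC.le hbound, fun x a => ?_⟩
  have hshift : ∀ k, {ω | (∀ j, j < k → Srw X k ω < Srw X j ω) ∧
      Srw X k ω + a ∈ Set.Ico (-x - 1) (-x)}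
        = strictMinIn X (Ico (-x - 1 - a) (-x - 1 - a + 1)) k := by
    intro k
    ext ω
    simp only [strictMinIn, mem_ofPred_eq, mem_Ico]
    constructor <;> rintro ⟨hmin, hlo, hhi⟩ <;> exact ⟨hmin, by linarith, by linarith⟩
  simpa only [hshift] using hbound (-x - 1 - a)

/-- There is a constant `C > 0` bounding the unit increments of `R⁻`,
such that uniformly in the shift `a` and the level `x`,
`∑_{k≥0} P(min_{0≤j≤k-1} S_j > S_k, S_k + a ∈ [-x-1,-x)) ≤ C < ∞`. -/
theorem uniform_strict_minima_bound
    [MeasurableSpace Ω] (μ : Measure Ω) [IsProbabilityMeasure μ]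
    (X : ℕ → Ω → ℝ)
    (hmeas : ∀ i, Measurable (X i))
    (hindep : iIndepFun X μ)
    (hident : ∀ i, IdentDistrib (X i) (X 0) μ μ)
    (hint : Integrable (X 0) μ)
    (hmean : ∫ ω, X 0 ω ∂μ = 0)
    (hsq : Integrable (fun ω => (X 0 ω) ^ 2) μ)
    (hvar : 0 < ∫ ω, (X 0 ω) ^ 2 ∂μ) :
    ∃ C : ℝ, 0 < C ∧
      (∀ y : ℝ, Rminus X μ (1 + y) - Rminus X μ y ≤ C) ∧
      ∀ x a : ℝ,
        (∑' k : ℕ,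
            μ {ω | (∀ j, j < k → Srw X k ω < Srw X j ω) ∧
              Srw X k ω + a ∈ Set.Ico (-x - 1) (-x)}) ≤ ENNReal.ofReal C :=
  uniform_strict_minima_bound_general μ X hmeas hindep hident hint hmean hvar
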